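/- In the lower-bound arena A (described as: nodes u, t, v₀, …, vₙ; z-edges from u to each vᵢ; x-edge from vᵢ to v_{i−1} for i ≥ 1 and x-edge from v₀ to vₙ; y-self-loops at each vᵢ; z-edge from v₀ to t; c- and d-edges from t to v₀), every finite path p with source(p) = u and col(p) = z w z for some w ∈ {x,y}* satisfies target(p) = t; moreover if p visits v₀→vₙ at least once, then the number of x-colored edges of p after its last v₀→vₙ edge equals n. -/

import Mathlib

/-- An arena over a set of colors `C`. -/
structure Arena (C : Type) where
  V : Type
  E : Type
  finV : Fintype V
  finE : Fintype E
  /-- `isP0 v` means node `v` is controlled by Player 0. -/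
  isP0 : V → Prop
  source : E → V
  target : E → V
  col : E → C
  out : ∀ v : V, ∃ e : E, source e = v

namespace Arena

variable {C : Type} (A : Arena C)

/-- `PathFrom v es w` : the edge list `es` forms a finite path from `v` to `w`. -/
def PathFrom : A.V → List A.E → A.V → Prop
  | v, [], w => v = w
  | v, e :: es, w => A.source e = v ∧ PathFrom (A.target e) es w

/-- The endpoint of the edge list `es` started at `v`. -/
def ptarget (v : A.V) (es : List A.E) : A.V := es.foldl (fun _ e => A.target e) v

/-- A strategy of Player 0: given the starting node and the finite play so far,
it outputs the next edge. -/
def Strategy (A : Arena C) : Type := A.V → List A.E → A.E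

/-- A legal strategy moves along an edge leaving the current node. -/
def IsStrategy (S : A.Strategy) : Prop :=
  ∀ v es, A.source (S v es) = A.ptarget v es

/-- The finite edge list `es`, viewed as a play from `v`, is consistent with `S`:
at every prefix ending in a Player-0 node, the next edge is the one chosen by `S`. -/
def ConsFrom (S : A.Strategy) (v : A.V) (es : List A.E) : Prop :=
  ∀ p e r, es = p ++ e :: r → A.isP0 (A.ptarget v p) → e = S v p

/-- `P` is an infinite path starting at `v`. -/
def InfPlay (v : A.V) (P : ℕ → A.E) : Prop :=
  A.source (P 0) = v ∧ ∀ i, A.target (P i) = A.source (P (i + 1))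

/-- The length-`k` prefix of an infinite play, as a list. -/
def prefixList (P : ℕ → A.E) (k : ℕ) : List A.E := List.ofFn (fun i : Fin k => P i)

/-- `colSet S v` is the set of color sequences of infinite plays from `v` consistent with `S`. -/
def colSet (S : A.Strategy) (v : A.V) : Set (ℕ → C) :=
  { γ | ∃ P : ℕ → A.E, A.InfPlay v P ∧ (∀ k, A.ConsFrom S v (A.prefixList P k)) ∧
      γ = fun i => A.col (P i) }

/-- `colSetU S U = ⋃ v ∈ U, colSet S v`. -/
def colSetU (S : A.Strategy) (U : Set A.V) : Set (ℕ → C) := ⋃ v ∈ U, A.colSet S v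

/-- State of a memory structure after reading a list of edges. -/
def mstate {M : Type} (δ : M → A.E → M) (m0 : M) (es : List A.E) : M := es.foldl δ m0

/-- `S` is implemented by the memory structure `(M, m0, δ)`: its moves depend only
on the current node and the current memory state. -/
def HasMemory (S : A.Strategy) (M : Type) (m0 : M) (δ : M → A.E → M) : Prop :=
  ∀ v1 es1 v2 es2, A.ptarget v1 es1 = A.ptarget v2 es2 →
    A.mstate δ m0 es1 = A.mstate δ m0 es2 → S v1 es1 = S v2 es2

/-- A memory structure is chromatic if transitions depend only on colors of edges. -/
def ChromaticMem (M : Type) (δ : M → A.E → M) : Prop :=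
  ∃ σ : M → C → M, ∀ m e, δ m e = σ m (A.col e)

/-- `S` is a `q`-state strategy. -/
def IsQState (S : A.Strategy) (q : ℕ) : Prop :=
  ∃ (M : Type) (_ : Fintype M) (m0 : M) (δ : M → A.E → M),
    Fintype.card M = q ∧ A.HasMemory S M m0 δ

/-- `S` is a chromatic `q`-state strategy. -/
def IsChromaticQState (S : A.Strategy) (q : ℕ) : Prop :=
  ∃ (M : Type) (_ : Fintype M) (m0 : M) (δ : M → A.E → M),
    Fintype.card M = q ∧ A.ChromaticMem M δ ∧ A.HasMemory S M m0 δ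

end Arena

/-- The set of colors of the lower-bound arena. -/
inductive Col : Type
  | x | y | z | c | d
deriving DecidableEq

instance instFintypeCol : Fintype Col :=
  ⟨{Col.x, Col.y, Col.z, Col.c, Col.d}, fun a => by cases a <;> simp⟩

/-- Nodes of the lower-bound arena: `u`, `t`, and `v₀, …, vₙ`. -/
inductive Node (n : ℕ) : Type
  | u | t
  | v (i : Fin (n + 1))
deriving DecidableEq, Fintype

/-- Edges of the lower-bound arena. -/
inductive Edge (n : ℕ) : Type
  /-- `z`-colored edge from `u` to `vᵢ`. -/
  | uv (i : Fin (n + 1))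
  /-- `x`-colored edge from `vᵢ` to `v_{i-1}` (from `v₀` to `vₙ` when `i = 0`). -/
  | xe (i : Fin (n + 1))
  /-- `y`-colored self-loop at `vᵢ`. -/
  | ye (i : Fin (n + 1))
  /-- `z`-colored edge from `v₀` to `t`. -/
  | vt
  /-- `c`-colored edge from `t` to `v₀`. -/
  | tc
  /-- `d`-colored edge from `t` to `v₀`. -/
  | td
deriving DecidableEq, Fintype

def Edge.src {n : ℕ} : Edge n → Node n
  | uv _ => Node.u
  | xe i => Node.v i
  | ye i => Node.v i
  | vt => Node.v 0
  | tc => Node.t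
  | td => Node.t

def Edge.tgt {n : ℕ} : Edge n → Node n
  | uv i => Node.v i
  | xe i => Node.v (i - 1)
  | ye i => Node.v i
  | vt => Node.t
  | tc => Node.v 0
  | td => Node.v 0

def Edge.color {n : ℕ} : Edge n → Col
  | uv _ => Col.z
  | xe _ => Col.x
  | ye _ => Col.y
  | vt => Col.z
  | tc => Col.c
  | td => Col.d

/-- The lower-bound arena: Player 0 controls only the node `t`. -/
def lbArena (n : ℕ) : Arena Col where
  V := Node n
  E := Edge n
  finV := inferInstance
  finE := inferInstance
  isP0 := fun v => v = Node.t
  source := Edge.src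
  target := Edge.tgt
  col := Edge.color
  out := by
    intro v
    cases v with
    | u => exact ⟨Edge.uv 0, rfl⟩
    | t => exact ⟨Edge.tc, rfl⟩
    | v i => exact ⟨Edge.ye i, rfl⟩

/-!
The first edge leaves `u` to some `vᵢ`, and no edge ever returns to `u`. From a node `vⱼ`,
an edge colored `x` or `y` is `xe j` or `ye j`, which lead to `v_{j-1}` and `vⱼ`, and the
only `z`-colored edge is `vt : v₀ → t`. So the path ends at `t`, and along a stretch that
avoids `xe 0` every `x`-edge lowers the index by one, ending at index `0`: such a stretch
starting at `vⱼ` has exactly `j` edges colored `x`. The stretch after the last `v₀ → vₙ`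
edge starts at `vₙ`.
-/

theorem List.exists_eq_append_singleton_of_append_cons_eq {α : Type*} {p r w : List α} {a b : α}
    (hab : a ≠ b) (h : p ++ a :: r = w ++ [b]) : ∃ w', r = w' ++ [b] ∧ w' ⊆ w := by
  rcases List.eq_nil_or_concat r with rfl | ⟨r', c, rfl⟩
  · exact absurd (List.singleton_inj.1 (List.append_inj' h rfl).2) hab
  · have h' : (p ++ a :: r') ++ [c] = w ++ [b] := by simpa using h
    obtain ⟨rfl, hc⟩ := List.append_inj' h' rfl
    refine ⟨r', by rw [List.concat_eq_append, List.singleton_inj.1 hc], ?_⟩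
    exact List.subset_append_of_subset_right _ (List.subset_cons_self _ _)

namespace Arena

variable {C : Type} (A : Arena C)

theorem pathFrom_append_iff {v w : A.V} {as bs : List A.E} :
    A.PathFrom v (as ++ bs) w ↔ ∃ m, A.PathFrom v as m ∧ A.PathFrom m bs w := by
  induction as generalizing v with
  | nil => simp [PathFrom]
  | cons e es ih => simp [PathFrom, ih, and_assoc]

theorem pathFrom_of_append_cons {v w : A.V} {p r : List A.E} {e : A.E}
    (h : A.PathFrom v (p ++ e :: r) w) : A.PathFrom (A.target e) r w := by
  obtain ⟨_, _, _, he⟩ := (A.pathFrom_append_iff).1 h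
  exact he

end Arena

namespace Edge

variable {n : ℕ}

theorem exists_eq_uv_of_src_eq_u {e : Edge n} (he : e.src = Node.u) : ∃ i, e = uv i := by
  cases e <;> simp_all [src]

theorem eq_vt_of_src_eq_v_of_color_eq_z {e : Edge n} {j : Fin (n + 1)} (he : e.src = Node.v j)
    (hz : e.color = Col.z) : e = vt ∧ j = 0 := by
  cases e <;> simp_all [src, color]

theorem eq_xe_or_eq_ye_of_src_eq_v {e : Edge n} {j : Fin (n + 1)} (he : e.src = Node.v j)
    (hxy : e.color = Col.x ∨ e.color = Col.y) : e = xe j ∨ e = ye j := by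
  cases e <;> simp_all [src, color]

end Edge

theorem eq_t_and_countP_x_eq_of_pathFrom_v {n : ℕ} {j : Fin (n + 1)} {es : List (Edge n)}
    {tgt : Node n} {w : List Col} (hw : ∀ a ∈ w, a = Col.x ∨ a = Col.y)
    (hpath : (lbArena n).PathFrom (Node.v j) es tgt)
    (hcol : es.map Edge.color = w ++ [Col.z]) :
    tgt = Node.t ∧
      (Edge.xe 0 ∉ es → es.countP (fun e => decide (e.color = Col.x)) = j) := by
  induction es generalizing j w with
  | nil => simp at hcol
  | cons e rest ih =>
    obtain ⟨hsrc, hrest⟩ := hpath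
    rcases w with _ | ⟨a, w⟩
    · obtain ⟨hz, rfl⟩ : e.color = Col.z ∧ rest = [] := by simpa using hcol
      obtain ⟨rfl, rfl⟩ := Edge.eq_vt_of_src_eq_v_of_color_eq_z hsrc hz
      exact ⟨hrest.symm, fun _ => by simp [Edge.color]⟩
    obtain ⟨rfl, hcol'⟩ : e.color = a ∧ rest.map Edge.color = w ++ [Col.z] := by
      simpa using hcol
    have hw' : ∀ b ∈ w, b = Col.x ∨ b = Col.y := fun b hb => hw b (by simp [hb])
    rcases Edge.eq_xe_or_eq_ye_of_src_eq_v hsrc (hw _ (by simp)) with rfl | rfl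
    · obtain ⟨htgt, hcount⟩ := ih hw' hrest hcol'
      refine ⟨htgt, fun hne => ?_⟩
      have hj : j ≠ 0 := by rintro rfl; simp at hne
      have hj' : (j - 1).val + 1 = j.val := by
        have := Fin.pos_iff_ne_zero.2 hj
        rw [Fin.val_sub_one_of_ne_zero hj]; omega
      rw [List.countP_cons, hcount (fun h => hne (List.mem_cons_of_mem _ h))]
      simpa [Edge.color] using hj'
    · obtain ⟨htgt, hcount⟩ := ih hw' hrest hcol'
      refine ⟨htgt, fun hne => ?_⟩
      rw [List.countP_cons, hcount (fun h => hne (List.mem_cons_of_mem _ h))]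
      simp [Edge.color]

theorem lb_path_target_general (n : ℕ) (w : List Col)
    (hw : ∀ a ∈ w, a = Col.x ∨ a = Col.y)
    (es : List (Edge n)) (tgt : Node n)
    (hpath : (lbArena n).PathFrom (Node.u) es tgt)
    (hcol : es.map (lbArena n).col = Col.z :: (w ++ [Col.z])) :
    tgt = Node.t ∧
      ∀ p₁ p₂ : List (Edge n), es = p₁ ++ Edge.xe 0 :: p₂ → Edge.xe 0 ∉ p₂ →
        p₂.countP (fun e => decide (e.color = Col.x)) = n := by
  change es.map Edge.color = _ at hcol
  obtain _ | ⟨e, rest⟩ := es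
  · simp at hcol
  obtain ⟨hsrc, hrest⟩ := hpath
  obtain ⟨i, rfl⟩ := Edge.exists_eq_uv_of_src_eq_u hsrc
  have hcol' : rest.map Edge.color = w ++ [Col.z] := by simpa [Edge.color] using hcol
  refine ⟨(eq_t_and_countP_x_eq_of_pathFrom_v hw hrest hcol').1,
    fun p₁ p₂ hsplit hnotin => ?_⟩
  obtain _ | ⟨_, q⟩ := p₁
  · simp at hsplit
  obtain ⟨-, rfl⟩ := List.cons_eq_cons.1 hsplit
  obtain ⟨w', hw', hsub⟩ := List.exists_eq_append_singleton_of_append_cons_eq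
    (p := q.map Edge.color) (a := Col.x) (b := Col.z) (by decide)
    (by simpa [Edge.color] using hcol')
  have hp₂ := (lbArena n).pathFrom_of_append_cons hrest
  simpa using (eq_t_and_countP_x_eq_of_pathFrom_v (fun a ha => hw a (hsub ha)) hp₂ hw').2 hnotin

/-- In the lower-bound arena, every finite path `p` with `source(p) = u` and
`col(p) = z w z` for a word `w ∈ {x,y}*` ends at `t`; moreover, if `p` contains
the `x`-colored edge from `v₀` to `vₙ`, then the number of `x`-colored edges of
`p` after its last occurrence equals `n`. -/
theorem lb_path_target (n : ℕ) (hn : 1 ≤ n) (w : List Col)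
    (hw : ∀ a ∈ w, a = Col.x ∨ a = Col.y)
    (es : List (Edge n)) (tgt : Node n)
    (hpath : (lbArena n).PathFrom (Node.u) es tgt)
    (hcol : es.map (lbArena n).col = Col.z :: (w ++ [Col.z])) :
    tgt = Node.t ∧
      ∀ p₁ p₂ : List (Edge n), es = p₁ ++ Edge.xe 0 :: p₂ → Edge.xe 0 ∉ p₂ →
        p₂.countP (fun e => decide (e.color = Col.x)) = n :=
  lb_path_target_general n w hw es tgt hpath hcol
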